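/- arXiv:2112.14694 — 4 statements merged into one kernel-verified Lean document; each statement's English description precedes it below -/
import Mathlib

section
/- Let A be a real 2×2 matrix with positive determinant that is not conformal, i.e. there exist unit vectors u, v such that the angle between Au and Av differs from the angle between u and v. Then there exists a rotation matrix R such that R·A has a positive real eigenvalue. -/
/-!
Left multiplication by the rotation `rotM θ` keeps the determinant and turns the trace into
`cos θ (a + d) + sin θ (b - c)`, which for a suitable `θ` equals `√((a + d)² + (b - c)²)`.
The characteristic polynomial `λ² - tλ + det` then has discriminant `(a - d)² + (b + c)² ≥ 0`
and positive trace `t`, so its larger root is a positive real eigenvalue.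
-/

noncomputable section

/-- Euclidean inner product on `ℝ²`. -/
def dot2 (v w : Fin 2 → ℝ) : ℝ := v 0 * w 0 + v 1 * w 1

/-- Euclidean norm on `ℝ²`. -/
def nrm2 (v : Fin 2 → ℝ) : ℝ := Real.sqrt (dot2 v v)

/-- Angle between two planar vectors. -/
def ang2 (v w : Fin 2 → ℝ) : ℝ := Real.arccos (dot2 v w / (nrm2 v * nrm2 w))

/-- The rotation matrix of angle `θ` (an arbitrary element of `SO(2,ℝ)`). -/
def rotM (θ : ℝ) : Matrix (Fin 2) (Fin 2) ℝ :=
  !![Real.cos θ, -Real.sin θ; Real.sin θ, Real.cos θ]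

open Matrix

theorem Matrix.exists_mulVec_eq_smul_of_sq_sub_trace_mul_add_det_eq_zero {R : Type*} [CommRing R]
    [IsDomain R] (M : Matrix (Fin 2) (Fin 2) R) {lam : R}
    (h : lam ^ 2 - M.trace * lam + M.det = 0) : ∃ x ≠ 0, M *ᵥ x = lam • x := by
  have hdet : (lam • 1 - M).det = 0 := by
    rw [← h, det_fin_two, det_fin_two, trace_fin_two]
    simp only [sub_apply, smul_apply, one_apply_eq, one_apply_ne (by decide : (0 : Fin 2) ≠ 1),
      one_apply_ne (by decide : (1 : Fin 2) ≠ 0), smul_eq_mul]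
    ring
  obtain ⟨x, hx, hker⟩ := exists_mulVec_eq_zero_iff.mpr hdet
  refine ⟨x, hx, ?_⟩
  rw [sub_mulVec, smul_mulVec, one_mulVec, sub_eq_zero] at hker
  exact hker.symm

theorem exists_pos_sq_sub_mul_add_eq_zero {b c : ℝ} (hb : 0 < b) (hc : 4 * c ≤ b ^ 2) :
    ∃ lam, 0 < lam ∧ lam ^ 2 - b * lam + c = 0 := by
  have hsq := Real.sq_sqrt (sub_nonneg.mpr hc)
  refine ⟨(b + √(b ^ 2 - 4 * c)) / 2, by positivity, ?_⟩
  linear_combination hsq / 4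

theorem Real.exists_cos_mul_add_sin_mul_eq_sqrt (x y : ℝ) :
    ∃ θ, Real.cos θ * x + Real.sin θ * y = √(x ^ 2 + y ^ 2) := by
  set z : ℂ := ⟨x, y⟩
  have hnorm : ‖z‖ = √(x ^ 2 + y ^ 2) := by
    rw [Complex.norm_def, Complex.normSq_mk, sq, sq]
  refine ⟨z.arg, ?_⟩
  rw [← hnorm]
  linear_combination -Real.cos z.arg * Complex.norm_mul_cos_arg z -
    Real.sin z.arg * Complex.norm_mul_sin_arg z + ‖z‖ * Real.cos_sq_add_sin_sq z.arg

theorem det_rotM (θ : ℝ) : (rotM θ).det = 1 := by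
  rw [rotM, det_fin_two_of]
  linear_combination Real.cos_sq_add_sin_sq θ

theorem trace_rotM_mul (θ : ℝ) (A : Matrix (Fin 2) (Fin 2) ℝ) :
    (rotM θ * A).trace = Real.cos θ * (A 0 0 + A 1 1) + Real.sin θ * (A 0 1 - A 1 0) := by
  rw [rotM, trace_fin_two, eta_fin_two A, mul_fin_two]
  simp only [of_apply, cons_val', cons_val_zero, cons_val_one, empty_val', cons_val_fin_one]
  ring

theorem Matrix.four_mul_det_le_sq_add_sq (A : Matrix (Fin 2) (Fin 2) ℝ) :
    4 * A.det ≤ (A 0 0 + A 1 1) ^ 2 + (A 0 1 - A 1 0) ^ 2 := by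
  rw [det_fin_two]
  nlinarith [sq_nonneg (A 0 0 - A 1 1), sq_nonneg (A 0 1 + A 1 0)]

theorem exists_rotation_positive_eigenvalue_general
    (A : Matrix (Fin 2) (Fin 2) ℝ) (hdet : 0 < A.det) :
    ∃ θ : ℝ, ∃ lam : ℝ, 0 < lam ∧ ∃ x : Fin 2 → ℝ, x ≠ 0 ∧
      (rotM θ * A).mulVec x = lam • x := by
  have hdet_le := A.four_mul_det_le_sq_add_sq
  obtain ⟨θ, hθ⟩ := Real.exists_cos_mul_add_sin_mul_eq_sqrt (A 0 0 + A 1 1) (A 0 1 - A 1 0)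
  have htrace : (rotM θ * A).trace = √((A 0 0 + A 1 1) ^ 2 + (A 0 1 - A 1 0) ^ 2) := by
    rw [trace_rotM_mul, hθ]
  have htrace_pos : 0 < (rotM θ * A).trace := by
    rw [htrace]
    exact Real.sqrt_pos.mpr (by linarith)
  have hdisc : 4 * (rotM θ * A).det ≤ (rotM θ * A).trace ^ 2 := by
    rwa [det_mul, det_rotM, one_mul, htrace, Real.sq_sqrt (by positivity)]
  obtain ⟨lam, hlam, hroot⟩ := exists_pos_sq_sub_mul_add_eq_zero htrace_pos hdisc
  exact ⟨θ, lam, hlam,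
    (rotM θ * A).exists_mulVec_eq_smul_of_sq_sub_trace_mul_add_det_eq_zero hroot⟩

/-- If `A` is a real 2×2 matrix with positive determinant which is
nonconformal (there exist unit vectors `u, v` with `∠(Au, Av) ≠ ∠(u, v)`), then some
rotation `R` makes `R·A` have a positive real eigenvalue. -/
theorem exists_rotation_positive_eigenvalue
    (A : Matrix (Fin 2) (Fin 2) ℝ) (hdet : 0 < A.det)
    (hnonconf : ∃ u v : Fin 2 → ℝ, nrm2 u = 1 ∧ nrm2 v = 1 ∧
      ang2 (A.mulVec u) (A.mulVec v) ≠ ang2 u v) :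
    ∃ θ : ℝ, ∃ lam : ℝ, 0 < lam ∧ ∃ x : Fin 2 → ℝ, x ≠ 0 ∧
      (rotM θ * A).mulVec x = lam • x :=
  exists_rotation_positive_eigenvalue_general A hdet

end
end

section
/- Let g : ℝ² → ℝ² be a C¹ diffeomorphism fixing the origin with derivative Dg(0) = diag(λ, λ⁻¹), 0 < λ < 1. Then for any α ∈ (0, π/2) there exist τ > 0 and δ > 0 such that: whenever 0 < |z| < δ, z ∉ C_α, and |ω| < τ, the point R_ω(g(z)) obtained by rotating g(z) by angle ω satisfies R_ω(g(z)) ∉ C_α. In particular gᵏ(z) ∉ C_α for every k ∈ ℕ such that the orbit z, g(z), …, g^{k−1}(z) remains in the open disk of radius δ around the origin. -/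
/-!
Outside `C_α` is where the margin `cos α · |y| - sin α · |x|` is positive, and there
`|y| > sin α · |z|`. Since `λ < 1 < λ⁻¹`, the map `diag(λ, λ⁻¹)` sends such a `z` to a point of
margin at least `(λ⁻¹ - λ) cos α sin α · |z|`. The margin is 2-Lipschitz, so a perturbation of
size a small multiple of `|z|` keeps the image outside `C_α`: near the origin `g` differs from
`Dg(0)` by `o(|z|)`, and the rotation by `ω` moves a point of norm at most `λ⁻¹|z|` by at most
`2|ω|λ⁻¹|z|`. The orbit statement is the case `ω = 0`, applied step by step.
-/

open Real

noncomputable section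

/-- The `α`-cone: `0` together with the nonzero vectors whose direction makes angle at
most `α` with the `x`-axis (on either side). -/
def cone (α : ℝ) : Set ℂ :=
  {z | z = 0 ∨ |Complex.arg z| ≤ α ∨ π - |Complex.arg z| ≤ α}

lemma exists_norm_sub_fderiv_le {E F : Type*} [NormedAddCommGroup E] [NormedSpace ℝ E]
    [NormedAddCommGroup F] [NormedSpace ℝ F] {f : E → F} (hf : DifferentiableAt ℝ f 0)
    (h0 : f 0 = 0) {ε : ℝ} (hε : 0 < ε) :
    ∃ δ > 0, ∀ z, ‖z‖ < δ → ‖f z - fderiv ℝ f 0 z‖ ≤ ε * ‖z‖ := by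
  have hlo := hf.hasFDerivAt.isLittleO.def hε
  simp only [h0, sub_zero] at hlo
  obtain ⟨δ, hδ, hball⟩ := Metric.eventually_nhds_iff.mp hlo
  exact ⟨δ, hδ, fun z hz => hball (by rwa [dist_zero_right])⟩

lemma iterate_mem_of_mapsTo_inter {α : Type*} {f : α → α} {U S : Set α}
    (hf : Set.MapsTo f (U ∩ S) S) {x : α} (hx : x ∈ S) :
    ∀ k : ℕ, (∀ j < k, f^[j] x ∈ U) → f^[k] x ∈ S
  | 0, _ => hx
  | k + 1, hU => by
    rw [Function.iterate_succ_apply']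
    exact hf ⟨hU k k.lt_succ_self,
      iterate_mem_of_mapsTo_inter hf hx k fun j hj => hU j (hj.trans k.lt_succ_self)⟩

lemma norm_exp_mul_sub_le {ω : ℝ} (hω : |ω| ≤ 1) (v w : ℂ) :
    ‖Complex.exp (ω * Complex.I) * v - w‖ ≤ ‖v - w‖ + 2 * |ω| * ‖w‖ := by
  have hωI : ‖(ω : ℂ) * Complex.I‖ = |ω| := by simp
  have hexp : ‖Complex.exp (ω * Complex.I) - 1‖ ≤ 2 * |ω| :=
    hωI ▸ Complex.norm_exp_sub_one_le (hωI ▸ hω)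
  calc ‖Complex.exp (ω * Complex.I) * v - w‖
      = ‖Complex.exp (ω * Complex.I) * (v - w) + (Complex.exp (ω * Complex.I) - 1) * w‖ := by
        ring_nf
    _ ≤ ‖v - w‖ + 2 * |ω| * ‖w‖ := by
        refine (norm_add_le _ _).trans (add_le_add ?_ ?_)
        · rw [norm_mul, Complex.norm_exp_ofReal_mul_I, one_mul]
        · rw [norm_mul]
          exact mul_le_mul_of_nonneg_right hexp (norm_nonneg _)

lemma abs_cos_lt_cos_iff {α θ : ℝ} (hα : α ∈ Set.Icc 0 π) (hθ : θ ∈ Set.Icc 0 π) :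
    |cos θ| < cos α ↔ α < θ ∧ θ < π - α := by
  have hπα : π - α ∈ Set.Icc 0 π := ⟨by linarith [hα.2], by linarith [hα.1]⟩
  rw [abs_lt, ← cos_pi_sub, strictAntiOn_cos.lt_iff_gt hπα hθ,
    strictAntiOn_cos.lt_iff_gt hθ hα, and_comm]

lemma not_mem_cone_iff_abs_re_lt {α : ℝ} (hα : α ∈ Set.Icc 0 π) (z : ℂ) :
    z ∉ cone α ↔ |z.re| < cos α * ‖z‖ := by
  rcases eq_or_ne z 0 with rfl | hz
  · simp [cone]
  have hnorm : 0 < ‖z‖ := norm_pos_iff.mpr hz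
  have harg : |z.arg| ∈ Set.Icc 0 π := ⟨abs_nonneg _, Complex.abs_arg_le_pi z⟩
  simp only [cone, Set.mem_ofPred_eq, hz, false_or, not_or, not_le]
  rw [lt_sub_comm, ← abs_cos_lt_cos_iff hα harg, cos_abs, Complex.cos_arg hz, abs_div,
    abs_of_pos hnorm, div_lt_iff₀ hnorm]

/-- Signed distance from `z` to the boundary lines of `C_α`, positive outside the cone. -/
def coneMargin (α : ℝ) (z : ℂ) : ℝ :=
  cos α * |z.im| - sin α * |z.re|

lemma abs_re_lt_iff_coneMargin_pos {α : ℝ} (hα : α ∈ Set.Icc 0 (π / 2)) (z : ℂ) :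
    |z.re| < cos α * ‖z‖ ↔ 0 < coneMargin α z := by
  have hc : 0 ≤ cos α := cos_nonneg_of_mem_Icc ⟨by linarith [hα.1, pi_pos], hα.2⟩
  have hs : 0 ≤ sin α := sin_nonneg_of_nonneg_of_le_pi hα.1 (by linarith [hα.2, pi_pos])
  have hsc := sin_sq_add_cos_sq α
  rw [coneMargin, sub_pos,
    ← pow_lt_pow_iff_left₀ (abs_nonneg z.re) (by positivity : 0 ≤ cos α * ‖z‖) two_ne_zero,
    ← pow_lt_pow_iff_left₀ (by positivity : 0 ≤ sin α * |z.re|) (by positivity) two_ne_zero]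
  simp only [mul_pow, sq_abs, Complex.sq_norm, Complex.normSq_apply]
  constructor <;> intro h <;> nlinarith

lemma not_mem_cone_iff_coneMargin_pos {α : ℝ} (hα : α ∈ Set.Icc 0 (π / 2)) (z : ℂ) :
    z ∉ cone α ↔ 0 < coneMargin α z := by
  rw [not_mem_cone_iff_abs_re_lt ⟨hα.1, by linarith [hα.2, pi_pos]⟩,
    abs_re_lt_iff_coneMargin_pos hα]

lemma coneMargin_sub_coneMargin_le (α : ℝ) (v w : ℂ) :
    coneMargin α v - coneMargin α w ≤ 2 * ‖v - w‖ := by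
  have term_le {x y : ℝ} (hx : |x| ≤ 1) (hy : |y| ≤ ‖v - w‖) : x * y ≤ ‖v - w‖ :=
    calc x * y ≤ |x| * |y| := (le_abs_self _).trans (abs_mul x y).le
      _ ≤ 1 * ‖v - w‖ := mul_le_mul hx hy (abs_nonneg _) zero_le_one
      _ = ‖v - w‖ := one_mul _
  have him : |(|v.im| - |w.im|)| ≤ ‖v - w‖ :=
    (abs_abs_sub_abs_le_abs_sub _ _).trans (by simpa using Complex.abs_im_le_norm (v - w))
  have hre : |(|w.re| - |v.re|)| ≤ ‖v - w‖ :=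
    (abs_abs_sub_abs_le_abs_sub _ _).trans
      (by simpa [abs_sub_comm] using Complex.abs_re_le_norm (v - w))
  have := term_le (abs_cos_le_one α) him
  have := term_le (abs_sin_le_one α) hre
  rw [coneMargin, coneMargin]
  linarith

lemma sin_mul_norm_lt_abs_im {α : ℝ} (hs : 0 ≤ sin α) {z : ℂ} (hz : 0 < coneMargin α z) :
    sin α * ‖z‖ < |z.im| := by
  have hsc := sin_sq_add_cos_sq α
  rw [coneMargin, sub_pos] at hz
  have hsq : (sin α * |z.re|) ^ 2 < (cos α * |z.im|) ^ 2 :=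
    pow_lt_pow_left₀ hz (by positivity) two_ne_zero
  rw [← pow_lt_pow_iff_left₀ (by positivity) (abs_nonneg _) two_ne_zero]
  simp only [mul_pow, sq_abs, Complex.sq_norm, Complex.normSq_apply] at hsq ⊢
  nlinarith

/-- `diag(λ, λ⁻¹)`, in the form of the hypothesis on `Dg(0)`. -/
def hyperbolicDiag (lam : ℝ) (z : ℂ) : ℂ :=
  (lam * z.re : ℝ) + (lam⁻¹ * z.im : ℝ) * Complex.I

@[simp]
lemma hyperbolicDiag_re (lam : ℝ) (z : ℂ) : (hyperbolicDiag lam z).re = lam * z.re := by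
  simp [hyperbolicDiag]

@[simp]
lemma hyperbolicDiag_im (lam : ℝ) (z : ℂ) : (hyperbolicDiag lam z).im = lam⁻¹ * z.im := by
  simp [hyperbolicDiag]

lemma norm_hyperbolicDiag_le {lam : ℝ} (hlam0 : 0 < lam) (hlam1 : lam ≤ 1) (z : ℂ) :
    ‖hyperbolicDiag lam z‖ ≤ lam⁻¹ * ‖z‖ := by
  have hinv : 1 ≤ lam⁻¹ := (one_le_inv₀ hlam0).mpr hlam1
  have hsq : lam ^ 2 ≤ lam⁻¹ ^ 2 := pow_le_pow_left₀ hlam0.le (hlam1.trans hinv) 2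
  rw [← pow_le_pow_iff_left₀ (norm_nonneg _) (by positivity) two_ne_zero]
  simp only [mul_pow, Complex.sq_norm, Complex.normSq_apply, hyperbolicDiag_re,
    hyperbolicDiag_im]
  nlinarith [mul_le_mul_of_nonneg_right hsq (mul_self_nonneg z.re)]

lemma coneMargin_hyperbolicDiag_ge {lam α : ℝ} (hlam0 : 0 < lam) (hlam1 : lam ≤ 1)
    (hc : 0 ≤ cos α) (hs : 0 ≤ sin α) {z : ℂ} (hz : 0 < coneMargin α z) :
    (lam⁻¹ - lam) * cos α * sin α * ‖z‖ ≤ coneMargin α (hyperbolicDiag lam z) := by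
  have hgap : 0 ≤ (lam⁻¹ - lam) * cos α :=
    mul_nonneg (sub_nonneg.mpr (hlam1.trans ((one_le_inv₀ hlam0).mpr hlam1))) hc
  have him := mul_le_mul_of_nonneg_left (sin_mul_norm_lt_abs_im hs hz).le hgap
  have hre := mul_le_mul_of_nonneg_left (sub_pos.mp hz).le hlam0.le
  rw [coneMargin, hyperbolicDiag_re, hyperbolicDiag_im, abs_mul, abs_mul, abs_of_pos hlam0,
    abs_of_pos (inv_pos.mpr hlam0)]
  linarith

def coneTolerance (lam α : ℝ) : ℝ :=
  (lam⁻¹ - lam) * cos α * sin α / 4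

lemma coneTolerance_pos {lam α : ℝ} (hlam0 : 0 < lam) (hlam1 : lam < 1)
    (hα : α ∈ Set.Ioo 0 (π / 2)) : 0 < coneTolerance lam α := by
  have := cos_pos_of_mem_Ioo ⟨by linarith [hα.1, pi_pos], hα.2⟩
  have := sin_pos_of_pos_of_lt_pi hα.1 (by linarith [hα.2, pi_pos])
  have := sub_pos.mpr (hlam1.trans ((one_lt_inv₀ hlam0).mpr hlam1))
  unfold coneTolerance
  positivity

lemma coneMargin_pos_of_norm_sub_hyperbolicDiag_le {lam α : ℝ} (hlam0 : 0 < lam)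
    (hlam1 : lam < 1) (hα : α ∈ Set.Ioo 0 (π / 2)) {z w : ℂ} (hz : 0 < coneMargin α z)
    (hw : ‖w - hyperbolicDiag lam z‖ ≤ coneTolerance lam α * ‖z‖) :
    0 < coneMargin α w := by
  have hz0 : z ≠ 0 := by rintro rfl; simp [coneMargin] at hz
  have hpos : 0 < coneTolerance lam α * ‖z‖ :=
    mul_pos (coneTolerance_pos hlam0 hlam1 hα) (norm_pos_iff.mpr hz0)
  have hLz := coneMargin_hyperbolicDiag_ge hlam0 hlam1.le
    (cos_nonneg_of_mem_Icc ⟨by linarith [hα.1, pi_pos], hα.2.le⟩)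
    (sin_nonneg_of_nonneg_of_le_pi hα.1.le (by linarith [hα.2, pi_pos])) hz
  have hlip := coneMargin_sub_coneMargin_le α (hyperbolicDiag lam z) w
  rw [norm_sub_rev] at hlip
  rw [coneTolerance] at hpos hw
  linarith

lemma coneMargin_exp_mul_pos {lam α ω : ℝ} (hlam0 : 0 < lam) (hlam1 : lam < 1)
    (hα : α ∈ Set.Ioo 0 (π / 2)) {z w : ℂ} (hz : 0 < coneMargin α z)
    (hw : ‖w - hyperbolicDiag lam z‖ ≤ coneTolerance lam α / 2 * ‖z‖)
    (hω : |ω| ≤ min 1 (lam * coneTolerance lam α / 4)) :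
    0 < coneMargin α (Complex.exp (ω * Complex.I) * w) := by
  refine coneMargin_pos_of_norm_sub_hyperbolicDiag_le hlam0 hlam1 hα hz ?_
  have hωlam : 2 * |ω| * lam⁻¹ ≤ coneTolerance lam α / 2 := by
    have := hω.trans (min_le_right _ _)
    rw [← le_div_iff₀ (by positivity)]
    field_simp at this ⊢
    linarith
  calc ‖Complex.exp (ω * Complex.I) * w - hyperbolicDiag lam z‖
      ≤ ‖w - hyperbolicDiag lam z‖ + 2 * |ω| * ‖hyperbolicDiag lam z‖ :=
        norm_exp_mul_sub_le (hω.trans (min_le_left _ _)) _ _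
    _ ≤ coneTolerance lam α / 2 * ‖z‖ + 2 * |ω| * (lam⁻¹ * ‖z‖) := by
        gcongr
        exact norm_hyperbolicDiag_le hlam0 hlam1.le z
    _ ≤ coneTolerance lam α * ‖z‖ := by nlinarith [norm_nonneg z]

theorem rotated_image_outside_cone_general
    (g : ℂ → ℂ) (hg : ContDiff ℝ 1 g)
    (h0 : g 0 = 0) (lam : ℝ) (hlam0 : 0 < lam) (hlam1 : lam < 1)
    (hD : ∀ z : ℂ, fderiv ℝ g 0 z = (lam * z.re : ℝ) + (lam⁻¹ * z.im : ℝ) * Complex.I)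
    (α : ℝ) (hα : α ∈ Set.Ioo 0 (π / 2)) :
    ∃ τ > 0, ∃ δ > 0,
      (∀ z : ℂ, 0 < ‖z‖ → ‖z‖ < δ → z ∉ cone α →
        ∀ ω : ℝ, |ω| < τ → Complex.exp (ω * Complex.I) * g z ∉ cone α) ∧
      (∀ z : ℂ, 0 < ‖z‖ → ‖z‖ < δ → z ∉ cone α →
        ∀ k : ℕ, (∀ j < k, ‖g^[j] z‖ < δ) → g^[k] z ∉ cone α) := by
  have hcone := not_mem_cone_iff_coneMargin_pos (α := α) ⟨hα.1.le, hα.2.le⟩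
  have hκ := coneTolerance_pos hlam0 hlam1 hα
  obtain ⟨δ, hδ, hgD⟩ := exists_norm_sub_fderiv_le (hg.differentiable one_ne_zero 0) h0
    (half_pos hκ)
  set τ := min 1 (lam * coneTolerance lam α / 4)
  have hτ : 0 < τ := by positivity
  have hrot : ∀ z, ‖z‖ < δ → z ∉ cone α → ∀ ω : ℝ, |ω| ≤ τ →
      Complex.exp (ω * Complex.I) * g z ∉ cone α := by
    intro z hzδ hz ω hω
    rw [hcone] at hz ⊢
    refine coneMargin_exp_mul_pos hlam0 hlam1 hα hz ?_ hω
    rw [hyperbolicDiag, ← hD z]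
    exact hgD z hzδ
  refine ⟨τ, hτ, δ, hδ, fun z _ hzδ hz ω hω => hrot z hzδ hz ω hω.le,
    fun z _ _ hz k hk => iterate_mem_of_mapsTo_inter (U := Metric.ball 0 δ) (S := (cone α)ᶜ)
      ?_ hz k fun j hj => mem_ball_zero_iff.mpr (hk j hj)⟩
  rintro w ⟨hwδ, hw⟩
  simpa using hrot w (mem_ball_zero_iff.mp hwδ) hw 0 (by simpa using hτ.le)

/-- Let `g` be a planar C¹ diffeomorphism fixing the origin with
`Dg(0) = diag(λ, λ⁻¹)`, `0 < λ < 1`. Given `α ∈ (0, π/2)` there are `τ, δ > 0` such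
that if `0 < |z| < δ`, `z ∉ C_α` and `|ω| < τ`, then the rotation by `ω` of `g(z)` is
not in `C_α`; in particular `gᵏ(z) ∉ C_α` as long as the orbit up to time `k - 1`
stays in the disk of radius `δ`. -/
theorem rotated_image_outside_cone
    (g : ℂ → ℂ) (hg : ContDiff ℝ 1 g) (hbij : Function.Bijective g)
    (h0 : g 0 = 0) (lam : ℝ) (hlam0 : 0 < lam) (hlam1 : lam < 1)
    (hD : ∀ z : ℂ, fderiv ℝ g 0 z = (lam * z.re : ℝ) + (lam⁻¹ * z.im : ℝ) * Complex.I)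
    (α : ℝ) (hα : α ∈ Set.Ioo 0 (π / 2)) :
    ∃ τ > 0, ∃ δ > 0,
      (∀ z : ℂ, 0 < ‖z‖ → ‖z‖ < δ → z ∉ cone α →
        ∀ ω : ℝ, |ω| < τ → Complex.exp (ω * Complex.I) * g z ∉ cone α) ∧
      (∀ z : ℂ, 0 < ‖z‖ → ‖z‖ < δ → z ∉ cone α →
        ∀ k : ℕ, (∀ j < k, ‖g^[j] z‖ < δ) → g^[k] z ∉ cone α) :=
  rotated_image_outside_cone_general g hg h0 lam hlam0 hlam1 hD α hα

end
end

section
/- Let g : ℝ² → ℝ² be an orientation-preserving homeomorphism fixing the origin that maps every circle centered at the origin onto a circle centered at the origin, and suppose g is differentiable at the origin with invertible derivative A = Dg(0). Then A is a conformal matrix, i.e. A is a positive scalar multiple of a rotation. -/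
/-!
Along each ray `r ↦ r • w`, differentiability at the origin gives `‖g (r • w)‖ / r → ‖A w‖`
as `r → 0⁺`. Since `g` maps circles about the origin to circles about the origin, `‖g z‖`
depends only on `‖z‖`, hence so does `‖A z‖`, and `A` scales all norms by one factor `c`.
Then `c⁻¹ • A` is a linear isometry of the plane, i.e. a rotation or a reflection, and the
sign of the determinant rules out the reflection.
-/

open Filter Topology Complex

theorem norm_eq_norm_of_mapsTo_sphere {E F : Type*} [NormedAddCommGroup E]
    [SeminormedAddCommGroup F] {f : E → F}
    (hf : ∀ r : ℝ, 0 < r → ∃ r' : ℝ, Set.MapsTo f (Metric.sphere 0 r) (Metric.sphere 0 r'))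
    {x y : E} (hxy : ‖x‖ = ‖y‖) : ‖f x‖ = ‖f y‖ := by
  rcases (norm_nonneg x).eq_or_lt with hx | hx
  · obtain rfl : x = 0 := norm_eq_zero.mp hx.symm
    obtain rfl : y = 0 := norm_eq_zero.mp (hxy ▸ hx).symm
    rfl
  · obtain ⟨r', hr'⟩ := hf _ hx
    have hfx := hr' (mem_sphere_zero_iff_norm.mpr rfl)
    have hfy := hr' (mem_sphere_zero_iff_norm.mpr hxy.symm)
    simp_all

section

variable {E F : Type*} [NormedAddCommGroup E] [NormedSpace ℝ E]
  [NormedAddCommGroup F] [NormedSpace ℝ F]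

theorem HasFDerivAt.tendsto_norm_apply_smul_div {f : E → F} {A : E →L[ℝ] F}
    (hA : HasFDerivAt f A 0) (h0 : f 0 = 0) (w : E) :
    Tendsto (fun r : ℝ => ‖f (r • w)‖ / r) (𝓝[>] 0) (𝓝 ‖A w‖) := by
  have hline : HasDerivAt (fun r : ℝ => f (r • w)) (A w) 0 :=
    (zero_smul ℝ w ▸ hA).comp_hasDerivAt 0
      (((hasDerivAt_id 0).smul_const w).congr_deriv (one_smul ℝ w))
  have hslope := (hasDerivAt_iff_tendsto_slope.mp hline).norm.mono_left
    (nhdsWithin_mono _ fun r (hr : 0 < r) => hr.ne')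
  refine hslope.congr' ?_
  filter_upwards [self_mem_nhdsWithin] with r (hr : 0 < r)
  simp [slope_def_module, h0, norm_smul, hr.le, div_eq_inv_mul]

theorem HasFDerivAt.norm_apply_eq_of_norm_eq {f : E → F} {A : E →L[ℝ] F}
    (hA : HasFDerivAt f A 0) (h0 : f 0 = 0)
    (hf : ∀ x y : E, ‖x‖ = ‖y‖ → ‖f x‖ = ‖f y‖) {x y : E} (hxy : ‖x‖ = ‖y‖) :
    ‖A x‖ = ‖A y‖ := by
  have hfxy (r : ℝ) : ‖f (r • x)‖ / r = ‖f (r • y)‖ / r := by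
    rw [hf (r • x) (r • y) (by simp only [norm_smul, hxy])]
  exact tendsto_nhds_unique ((hA.tendsto_norm_apply_smul_div h0 x).congr hfxy)
    (hA.tendsto_norm_apply_smul_div h0 y)

theorem ContinuousLinearMap.norm_apply_eq_mul_norm {A : E →L[ℝ] F}
    (hA : ∀ x y : E, ‖x‖ = ‖y‖ → ‖A x‖ = ‖A y‖) {e : E} (he : ‖e‖ = 1) (x : E) :
    ‖A x‖ = ‖A e‖ * ‖x‖ := by
  rw [hA x (‖x‖ • e) (by simp [norm_smul, he]), map_smul, norm_smul, norm_norm, mul_comm]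

end

theorem Complex.exists_linearIsometryEquiv_eq_rotation (e : ℂ ≃ₗᵢ[ℝ] ℂ)
    (he : 0 < LinearMap.det (e.toLinearEquiv : ℂ →ₗ[ℝ] ℂ)) : ∃ a : Circle, e = rotation a := by
  obtain ⟨a, rfl | rfl⟩ := linear_isometry_complex e
  · exact ⟨a, rfl⟩
  · rw [LinearIsometryEquiv.toLinearEquiv_trans, LinearEquiv.coe_trans, LinearMap.det_comp] at he
    norm_num at he

theorem ContinuousLinearMap.exists_eq_smul_exp_mul_of_norm_apply_eq_mul {A : ℂ →L[ℝ] ℂ} {c : ℝ}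
    (hc : 0 < c) (hA : ∀ z, ‖A z‖ = c * ‖z‖) (hdet : 0 < LinearMap.det (A : ℂ →ₗ[ℝ] ℂ)) :
    ∃ θ : ℝ, ∀ z : ℂ, A z = c • (exp (θ * I) * z) := by
  let e : ℂ ≃ₗᵢ[ℝ] ℂ := LinearIsometry.toLinearIsometryEquiv
    ⟨c⁻¹ • (A : ℂ →ₗ[ℝ] ℂ), fun z => by simp [hA, abs_of_pos hc, hc.ne']⟩ rfl
  have hAe : (A : ℂ →ₗ[ℝ] ℂ) = c • (e.toLinearEquiv : ℂ →ₗ[ℝ] ℂ) := by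
    ext z; simp [e, hc.ne']
  obtain ⟨a, ha⟩ := Complex.exists_linearIsometryEquiv_eq_rotation e (by
    rw [hAe, LinearMap.det_smul] at hdet
    exact pos_of_mul_pos_right hdet (by positivity))
  obtain ⟨θ, rfl⟩ := Circle.exp_surjective a
  refine ⟨θ, fun z => ?_⟩
  have hAz := LinearMap.congr_fun hAe z
  rw [ha] at hAz
  simpa [rotation_apply] using hAz

theorem ContinuousLinearMap.exists_eq_smul_exp_mul_of_norm_apply_eq {A : ℂ →L[ℝ] ℂ}
    (hA : ∀ z w : ℂ, ‖z‖ = ‖w‖ → ‖A z‖ = ‖A w‖) (hdet : 0 < LinearMap.det (A : ℂ →ₗ[ℝ] ℂ)) :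
    ∃ ρ : ℝ, 0 < ρ ∧ ∃ θ : ℝ, ∀ z : ℂ, A z = ρ • (exp (θ * I) * z) := by
  have hAz := A.norm_apply_eq_mul_norm hA norm_one
  have hc : 0 < ‖A 1‖ := by
    refine (norm_nonneg _).lt_of_ne fun h => hdet.ne' ?_
    have hA0 : (A : ℂ →ₗ[ℝ] ℂ) = 0 := by
      ext z
      simpa [← h] using hAz z
    simp [hA0]
  exact ⟨_, hc, A.exists_eq_smul_exp_mul_of_norm_apply_eq_mul hc hAz hdet⟩

/-- Let `g` be an orientation-preserving homeomorphism of the plane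
fixing the origin, mapping every circle centered at the origin onto a circle centered at
the origin, and differentiable at the origin with invertible derivative `A` of positive
determinant. Then `A` is conformal: a positive scalar multiple of a rotation. -/
theorem circle_preserving_derivative_conformal
    (g : ℂ ≃ₜ ℂ) (h0 : g 0 = 0)
    (A : ℂ →L[ℝ] ℂ) (hA : HasFDerivAt (⇑g) A 0)
    (hdet : 0 < LinearMap.det (A : ℂ →ₗ[ℝ] ℂ))
    (hcirc : ∀ r : ℝ, 0 < r → ∃ r' : ℝ, 0 < r' ∧
      (⇑g) '' Metric.sphere (0 : ℂ) r = Metric.sphere (0 : ℂ) r') :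
    ∃ ρ : ℝ, 0 < ρ ∧ ∃ θ : ℝ, ∀ z : ℂ,
      A z = ρ • (Complex.exp (θ * Complex.I) * z) := by
  have hg : ∀ x y : ℂ, ‖x‖ = ‖y‖ → ‖g x‖ = ‖g y‖ := fun _ _ =>
    norm_eq_norm_of_mapsTo_sphere fun r hr =>
      (hcirc r hr).imp fun _ h => h.2 ▸ Set.mapsTo_image g _
  exact A.exists_eq_smul_exp_mul_of_norm_apply_eq
    (fun _ _ => hA.norm_apply_eq_of_norm_eq h0 hg) hdet
end

section
/- A product of real 2×2 matrices D = C·B·A, where B is conformal (a positive multiple of a rotation) and C satisfies ‖C − I‖ < δ/2, approximately preserves the angle distortion of A: for unit vectors u₀, v₀, one has |⟨Du₀/|Du₀|, Dv₀/|Dv₀|⟩ − ⟨Au₀/|Au₀|, Av₀/|Av₀|⟩| < ε, provided δ > 0 is chosen (depending on ε) so that |u − z| < δ and |v − w| < δ for unit vectors imply |⟨u,v⟩ − ⟨z,w⟩| < ε. In particular, if A is nonconformal then for small enough δ the matrix D = C·B·A cannot be conformal. -/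
/-!
Since `B` is conformal, `B ∘ A` distorts angles exactly as `A` does. Writing `ẑ` for the
normalization of `z`, the identity `‖z‖ • (ŵ - ẑ) = (‖z‖ - ‖w‖) • ŵ + (w - z)` gives
`‖z‖ ‖ŵ - ẑ‖ ≤ 2 ‖w - z‖`; for `w = C z` this is `< δ ‖z‖`, so `C` moves every direction by
less than `δ`, and the choice of `δ` bounds the resulting change of the inner product by `ε`.
If `D` were conformal too, that inner product would be `⟨u₀, v₀⟩`, so `A` would distort the
angle by less than `ε`.
-/

noncomputable section

/-- The real (Euclidean) inner product on the plane `ℂ ≅ ℝ²`. -/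
def rinner (u v : ℂ) : ℝ := (u * (starRingEnd ℂ) v).re

/-- Normalization of a planar vector. -/
def nv (u : ℂ) : ℂ := ((‖u‖ : ℝ))⁻¹ • u

/-- A real-linear map of the plane is conformal if it is a positive multiple of a
rotation. -/
def IsConformalMap2 (D : ℂ →L[ℝ] ℂ) : Prop :=
  ∃ ρ : ℝ, 0 < ρ ∧ ∃ θ : ℝ, ∀ z : ℂ, D z = ρ • (Complex.exp (θ * Complex.I) * z)

namespace NormedSpace

variable {V : Type*} [NormedAddCommGroup V] [NormedSpace ℝ V]

lemma norm_normalize_le_one (x : V) : ‖normalize x‖ ≤ 1 := by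
  rcases eq_or_ne x 0 with rfl | hx
  · simp
  · exact (norm_normalize hx).le

lemma norm_mul_norm_normalize_sub_normalize_le (x y : V) :
    ‖y‖ * ‖normalize x - normalize y‖ ≤ 2 * ‖x - y‖ := by
  have hsplit :
      ‖y‖ • (normalize x - normalize y) = (‖y‖ - ‖x‖) • normalize x + (x - y) := by
    rw [smul_sub, sub_smul, norm_smul_normalize, norm_smul_normalize]
    abel
  have hnorms : |‖y‖ - ‖x‖| ≤ ‖x - y‖ := by
    rw [norm_sub_rev]
    exact abs_norm_sub_norm_le y x
  calc ‖y‖ * ‖normalize x - normalize y‖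
      = ‖(‖y‖ - ‖x‖) • normalize x + (x - y)‖ := by
        rw [← hsplit, norm_smul, norm_norm y]
    _ ≤ |‖y‖ - ‖x‖| * ‖normalize x‖ + ‖x - y‖ := by
        simpa only [norm_smul, Real.norm_eq_abs] using
          norm_add_le ((‖y‖ - ‖x‖) • normalize x) (x - y)
    _ ≤ ‖x - y‖ * 1 + ‖x - y‖ := by
        gcongr
        exact norm_normalize_le_one x
    _ = 2 * ‖x - y‖ := by ring

lemma norm_normalize_apply_sub_normalize_lt {C : V →L[ℝ] V} {δ : ℝ}
    (hC : ‖C - ContinuousLinearMap.id ℝ V‖ < δ / 2) {y : V} (hy : y ≠ 0) :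
    ‖normalize (C y) - normalize y‖ < δ := by
  have hy' : 0 < ‖y‖ := norm_pos_iff.2 hy
  have hCy : ‖C y - y‖ ≤ ‖C - ContinuousLinearMap.id ℝ V‖ * ‖y‖ :=
    (C - ContinuousLinearMap.id ℝ V).le_opNorm y
  refine lt_of_mul_lt_mul_left ?_ hy'.le
  calc ‖y‖ * ‖normalize (C y) - normalize y‖
      ≤ 2 * ‖C y - y‖ := norm_mul_norm_normalize_sub_normalize_le _ _
    _ ≤ 2 * (‖C - ContinuousLinearMap.id ℝ V‖ * ‖y‖) := by gcongr
    _ < 2 * (δ / 2 * ‖y‖) := by gcongr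
    _ = ‖y‖ * δ := by ring

end NormedSpace

open NormedSpace (norm_normalize normalize_eq_self_of_norm_eq_one
  norm_normalize_apply_sub_normalize_lt)

lemma nv_eq_normalize (u : ℂ) : nv u = NormedSpace.normalize u := rfl

lemma nv_mul (c z : ℂ) : nv (c * z) = nv c * nv z := by
  simp only [nv, Complex.real_smul, norm_mul]
  push_cast
  ring

lemma rinner_mul_mul (a u v : ℂ) : rinner (a * u) (a * v) = ‖a‖ ^ 2 * rinner u v := by
  have h : a * u * (starRingEnd ℂ) (a * v) =
      ((Complex.normSq a : ℝ) : ℂ) * (u * (starRingEnd ℂ) v) := by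
    rw [map_mul, Complex.normSq_eq_conj_mul_self]
    ring
  rw [rinner, h, Complex.re_ofReal_mul, Complex.normSq_eq_norm_sq, rinner]

namespace IsConformalMap2

variable {E : ℂ →L[ℝ] ℂ}

lemma exists_ne_zero_mul (hE : IsConformalMap2 E) :
    ∃ c : ℂ, c ≠ 0 ∧ ∀ z, E z = c * z := by
  obtain ⟨ρ, hρ, θ, h⟩ := hE
  refine ⟨ρ * Complex.exp (θ * Complex.I),
    mul_ne_zero (Complex.ofReal_ne_zero.2 hρ.ne') (Complex.exp_ne_zero _), fun z => ?_⟩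
  rw [h z, Complex.real_smul, mul_assoc]

lemma injective (hE : IsConformalMap2 E) : Function.Injective E := by
  obtain ⟨c, hc, h⟩ := hE.exists_ne_zero_mul
  intro z w hzw
  rw [h, h] at hzw
  exact mul_left_cancel₀ hc hzw

lemma rinner_nv_apply (hE : IsConformalMap2 E) (u v : ℂ) :
    rinner (nv (E u)) (nv (E v)) = rinner (nv u) (nv v) := by
  obtain ⟨c, hc, h⟩ := hE.exists_ne_zero_mul
  rw [h, h, nv_mul, nv_mul, rinner_mul_mul, nv_eq_normalize, norm_normalize hc, one_pow,
    one_mul]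

end IsConformalMap2

theorem composition_angle_distortion_general
    (A B C D : ℂ →L[ℝ] ℂ)
    (hA : Function.Bijective A) (hC : Function.Bijective C)
    (hBconf : IsConformalMap2 B)
    (ε δ : ℝ)
    (hδprop : ∀ u v z w : ℂ, ‖u‖ = 1 → ‖v‖ = 1 →
      ‖z‖ = 1 → ‖w‖ = 1 →
      ‖u - z‖ < δ → ‖v - w‖ < δ →
      |rinner u v - rinner z w| < ε)
    (hCnorm : ‖C - ContinuousLinearMap.id ℝ ℂ‖ < δ / 2)
    (hD : D = C.comp (B.comp A))
    (u₀ v₀ : ℂ) (hu : ‖u₀‖ = 1) (hv : ‖v₀‖ = 1) :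
    |rinner (nv (D u₀)) (nv (D v₀)) - rinner (nv (A u₀)) (nv (A v₀))| < ε ∧
    (rinner (nv (A u₀)) (nv (A v₀)) ≠ rinner u₀ v₀ →
      ε ≤ |rinner (nv (A u₀)) (nv (A v₀)) - rinner u₀ v₀| →
      ¬ IsConformalMap2 D) := by
  have hBA : ∀ z : ℂ, ‖z‖ = 1 → B (A z) ≠ 0 := fun z hz =>
    (map_ne_zero_iff B hBconf.injective).2 <|
      (map_ne_zero_iff A hA.injective).2 (norm_ne_zero_iff.1 (by simp [hz]))
  have hCBA : ∀ z : ℂ, ‖z‖ = 1 → C (B (A z)) ≠ 0 := fun z hz =>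
    (map_ne_zero_iff C hC.injective).2 (hBA z hz)
  have hclose : |rinner (nv (D u₀)) (nv (D v₀)) - rinner (nv (A u₀)) (nv (A v₀))| < ε := by
    rw [← hBconf.rinner_nv_apply (A u₀) (A v₀), hD]
    simp only [ContinuousLinearMap.comp_apply, nv_eq_normalize]
    exact hδprop _ _ _ _
      (norm_normalize (hCBA u₀ hu)) (norm_normalize (hCBA v₀ hv))
      (norm_normalize (hBA u₀ hu)) (norm_normalize (hBA v₀ hv))
      (norm_normalize_apply_sub_normalize_lt hCnorm (hBA u₀ hu))
      (norm_normalize_apply_sub_normalize_lt hCnorm (hBA v₀ hv))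
  refine ⟨hclose, fun _ hdefect hDconf => ?_⟩
  rw [hDconf.rinner_nv_apply, nv_eq_normalize, nv_eq_normalize,
    normalize_eq_self_of_norm_eq_one hu, normalize_eq_self_of_norm_eq_one hv,
    abs_sub_comm] at hclose
  exact hdefect.not_gt hclose

/-- Let `D = C·B·A` with `B` conformal and `‖C − I‖ < δ/2`, where
`δ` is chosen (for a given `ε`) so that `δ`-perturbations of unit vectors change inner
products by less than `ε`. Then `D` distorts the angle between unit vectors `u₀, v₀`
almost exactly as `A` does:
`|⟨Du₀/|Du₀|, Dv₀/|Dv₀|⟩ − ⟨Au₀/|Au₀|, Av₀/|Av₀|⟩| < ε`. In particular, if `A` is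
nonconformal at `u₀, v₀` and `ε` is at most the corresponding angle defect, then `D`
cannot be conformal. -/
theorem composition_angle_distortion
    (A B C D : ℂ →L[ℝ] ℂ)
    (hA : Function.Bijective A) (hB : Function.Bijective B) (hC : Function.Bijective C)
    (hBconf : IsConformalMap2 B)
    (ε δ : ℝ) (hε : 0 < ε) (hδ : 0 < δ)
    (hδprop : ∀ u v z w : ℂ, ‖u‖ = 1 → ‖v‖ = 1 →
      ‖z‖ = 1 → ‖w‖ = 1 →
      ‖u - z‖ < δ → ‖v - w‖ < δ →
      |rinner u v - rinner z w| < ε)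
    (hCnorm : ‖C - ContinuousLinearMap.id ℝ ℂ‖ < δ / 2)
    (hD : D = C.comp (B.comp A))
    (u₀ v₀ : ℂ) (hu : ‖u₀‖ = 1) (hv : ‖v₀‖ = 1) :
    |rinner (nv (D u₀)) (nv (D v₀)) - rinner (nv (A u₀)) (nv (A v₀))| < ε ∧
    (rinner (nv (A u₀)) (nv (A v₀)) ≠ rinner u₀ v₀ →
      ε ≤ |rinner (nv (A u₀)) (nv (A v₀)) - rinner u₀ v₀| →
      ¬ IsConformalMap2 D) :=
  composition_angle_distortion_general A B C D hA hC hBconf ε δ hδprop hCnorm hD u₀ v₀ hu hv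

end
end
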